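/- Let β and γ be real numbers with 0 < β < γ, let μ be a Borel probability measure on ℝ with μ([-β, β]) = 1, let F be the cumulative distribution function of μ, and define g(y) = (F(y+γ) - F(y-γ))/(2γ). Then -∫_ℝ g(y) log₂ g(y) dy = log₂(2γ) - (1/(2γ)) ∫_{-β}^{β} ( F(y) log₂ F(y) + (1 - F(y)) log₂(1 - F(y)) ) dy. -/

import Mathlib

/-!
Since `2γ` exceeds the width `2β` of the support of `μ`, at every `y` at most one of
`F (y + γ)`, `F (y - γ)` lies strictly between `0` and `1`. Hence the density `g` equals
`F (y + γ) / 2γ` on `[-β - γ, β - γ]`, the constant `1 / 2γ` on `(β - γ, γ - β)` and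
`(1 - F (y - γ)) / 2γ` on `[γ - β, β + γ]`, and vanishes elsewhere. Shifting the two outer pieces
back to `[-β, β]` and expanding `(t / c) log (t / c) = (t log t - t log c) / c` with `c = 2γ`,
the `log c` terms carry total weight `2β / c + 2(γ - β) / c = 1`.
-/

open MeasureTheory ProbabilityTheory Set

namespace Real

lemma continuous_mul_logb (b : ℝ) : Continuous fun x : ℝ => x * logb b x := by
  simpa only [logb, mul_div_assoc] using continuous_mul_log.div_const (log b)

lemma mul_logb_div (b x : ℝ) {c : ℝ} (hc : c ≠ 0) :
    x / c * logb b (x / c) = (x * logb b x - x * logb b c) / c := by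
  rcases eq_or_ne x 0 with rfl | hx
  · simp
  · rw [logb_div hx hc]
    ring

end Real

namespace ProbabilityTheory

variable {μ : Measure ℝ} [IsProbabilityMeasure μ] {a b x : ℝ}

lemma cdf_eq_zero_of_lt (hμ : μ (Icc a b) = 1) (hx : x < a) : cdf μ x = 0 := by
  have hcompl : μ (Icc a b)ᶜ = 0 := (prob_compl_eq_zero_iff measurableSet_Icc).2 hμ
  have hIic : μ (Iic x) = 0 :=
    measure_mono_null (fun y (hy : y ≤ x) (hyab : y ∈ Icc a b) => (hy.trans_lt hx).not_ge hyab.1)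
      hcompl
  rw [cdf_eq_real, measureReal_def, hIic, ENNReal.toReal_zero]

lemma cdf_eq_one_of_le (hμ : μ (Icc a b) = 1) (hx : b ≤ x) : cdf μ x = 1 := by
  have hIic : μ (Iic x) = 1 :=
    le_antisymm prob_le_one (hμ ▸ measure_mono fun y hy => hy.2.trans hx)
  rw [cdf_eq_real, measureReal_def, hIic, ENNReal.toReal_one]

end ProbabilityTheory

lemma intervalIntegrable_comp_of_mem_Icc {φ k : ℝ → ℝ} (hφ : Continuous φ) (hk : Measurable k)
    {m M : ℝ} (hkM : ∀ x, k x ∈ Icc m M) (s t : ℝ) :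
    IntervalIntegrable (fun x => φ (k x)) volume s t := by
  obtain ⟨C, hC⟩ := (isCompact_Icc (a := m) (b := M)).exists_bound_of_continuousOn hφ.continuousOn
  rw [intervalIntegrable_iff]
  exact Measure.integrableOn_of_bounded measure_Ioc_lt_top.ne
    (hφ.measurable.comp hk).aestronglyMeasurable (Filter.Eventually.of_forall fun x => hC _ (hkM x))

/-- The density of `X + U` when `X` has distribution function `F` and `U` is uniform on
`[-γ, γ]`. -/
noncomputable def uniformConvDensity (F : ℝ → ℝ) (γ y : ℝ) : ℝ := (F (y + γ) - F (y - γ)) / (2 * γ)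

section Smoothing

variable {φ F : ℝ → ℝ} {a b γ y : ℝ}

lemma le_of_eq_zero_of_eq_one (hF0 : ∀ x < a, F x = 0) (hF1 : ∀ x, b ≤ x → F x = 1) :
    a ≤ b :=
  le_of_not_gt fun h => zero_ne_one ((hF0 b h).symm.trans (hF1 b le_rfl))

lemma uniformConvDensity_eq_zero_of_lt (hF0 : ∀ x < a, F x = 0) (hγ : 0 ≤ γ) (hy : y < a - γ) :
    uniformConvDensity F γ y = 0 := by
  rw [uniformConvDensity, hF0 _ (by linarith), hF0 _ (by linarith), sub_self, zero_div]

lemma uniformConvDensity_eq_zero_of_le (hF1 : ∀ x, b ≤ x → F x = 1) (hγ : 0 ≤ γ) (hy : b + γ ≤ y) :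
    uniformConvDensity F γ y = 0 := by
  rw [uniformConvDensity, hF1 _ (by linarith), hF1 _ (by linarith), sub_self, zero_div]

lemma uniformConvDensity_eq_of_le (hF0 : ∀ x < a, F x = 0) (hγ : b - a < 2 * γ)
    (hy : y ≤ b - γ) : uniformConvDensity F γ y = F (y + γ) / (2 * γ) := by
  rw [uniformConvDensity, hF0 (y - γ) (by linarith), sub_zero]

lemma uniformConvDensity_eq_of_ge (hF1 : ∀ x, b ≤ x → F x = 1) (hγ : b - a < 2 * γ)
    (hy : a + γ ≤ y) : uniformConvDensity F γ y = (1 - F (y - γ)) / (2 * γ) := by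
  rw [uniformConvDensity, hF1 (y + γ) (by linarith)]

lemma uniformConvDensity_eq_const (hF0 : ∀ x < a, F x = 0) (hF1 : ∀ x, b ≤ x → F x = 1)
    (hy : y ∈ Ioo (b - γ) (a + γ)) : uniformConvDensity F γ y = 1 / (2 * γ) := by
  rw [uniformConvDensity, hF1 (y + γ) (by linarith [hy.1]), hF0 (y - γ) (by linarith [hy.2]),
    sub_zero]

lemma integral_comp_uniformConvDensity_eq_intervalIntegral (hφ0 : φ 0 = 0)
    (hF0 : ∀ x < a, F x = 0) (hF1 : ∀ x, b ≤ x → F x = 1) (hab : a ≤ b) (hγ : 0 ≤ γ) :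
    ∫ y, φ (uniformConvDensity F γ y) = ∫ y in (a - γ)..(b + γ), φ (uniformConvDensity F γ y) := by
  rw [intervalIntegral.integral_of_le (by linarith), ← integral_Icc_eq_integral_Ioc,
    setIntegral_eq_integral_of_forall_compl_eq_zero]
  intro y hy
  rcases not_and_or.1 hy with hy | hy
  · rw [uniformConvDensity_eq_zero_of_lt hF0 hγ (not_le.1 hy), hφ0]
  · rw [uniformConvDensity_eq_zero_of_le hF1 hγ (not_le.1 hy).le, hφ0]

lemma intervalIntegral_comp_uniformConvDensity_left (hF0 : ∀ x < a, F x = 0)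
    (hab : a ≤ b) (hγ : b - a < 2 * γ) :
    ∫ y in (a - γ)..(b - γ), φ (uniformConvDensity F γ y)
      = ∫ x in a..b, φ (F x / (2 * γ)) := by
  have hshift := intervalIntegral.integral_comp_add_right (fun x => φ (F x / (2 * γ))) γ
    (a := a - γ) (b := b - γ)
  rw [sub_add_cancel, sub_add_cancel] at hshift
  rw [← hshift]
  refine intervalIntegral.integral_congr fun y hy => ?_
  rw [uIcc_of_le (by linarith)] at hy
  rw [uniformConvDensity_eq_of_le hF0 hγ hy.2]

lemma intervalIntegral_comp_uniformConvDensity_right (hF1 : ∀ x, b ≤ x → F x = 1)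
    (hab : a ≤ b) (hγ : b - a < 2 * γ) :
    ∫ y in (a + γ)..(b + γ), φ (uniformConvDensity F γ y)
      = ∫ x in a..b, φ ((1 - F x) / (2 * γ)) := by
  have hshift := intervalIntegral.integral_comp_sub_right (fun x => φ ((1 - F x) / (2 * γ))) γ
    (a := a + γ) (b := b + γ)
  rw [add_sub_cancel_right, add_sub_cancel_right] at hshift
  rw [← hshift]
  refine intervalIntegral.integral_congr fun y hy => ?_
  rw [uIcc_of_le (by linarith)] at hy
  rw [uniformConvDensity_eq_of_ge hF1 hγ hy.1]

lemma intervalIntegral_comp_uniformConvDensity_middle (hF0 : ∀ x < a, F x = 0)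
    (hF1 : ∀ x, b ≤ x → F x = 1) (hγ : b - a < 2 * γ) :
    ∫ y in (b - γ)..(a + γ), φ (uniformConvDensity F γ y)
      = (2 * γ - (b - a)) * φ (1 / (2 * γ)) := by
  -- `F a` may be positive, so the density is constant only on the open interval.
  rw [intervalIntegral.integral_of_le (by linarith), integral_Ioc_eq_integral_Ioo,
    setIntegral_congr_fun measurableSet_Ioo fun y hy => by
      rw [uniformConvDensity_eq_const hF0 hF1 hy],
    setIntegral_const, Real.volume_real_Ioo_of_le (by linarith), smul_eq_mul]
  ring

theorem integral_comp_uniformConvDensity (hφ : Continuous φ) (hφ0 : φ 0 = 0)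
    (hFm : Measurable F) (hF : ∀ x, F x ∈ Icc 0 1) (hF0 : ∀ x < a, F x = 0)
    (hF1 : ∀ x, b ≤ x → F x = 1) (hγ : b - a < 2 * γ) :
    ∫ y, φ (uniformConvDensity F γ y)
      = (∫ x in a..b, φ (F x / (2 * γ)) + φ ((1 - F x) / (2 * γ)))
        + (2 * γ - (b - a)) * φ (1 / (2 * γ)) := by
  have hab : a ≤ b := le_of_eq_zero_of_eq_one hF0 hF1
  have hφ' : Continuous fun t => φ (t / (2 * γ)) := hφ.comp (continuous_id.div_const _)
  have hdensity (s t : ℝ) :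
      IntervalIntegrable (fun y => φ (uniformConvDensity F γ y)) volume s t :=
    intervalIntegrable_comp_of_mem_Icc (k := fun y => F (y + γ) - F (y - γ))
      (m := -1) (M := 1) hφ'
      ((hFm.comp (measurable_add_const γ)).sub (hFm.comp (measurable_sub_const γ)))
      (fun y => ⟨by linarith [(hF (y + γ)).1, (hF (y - γ)).2],
        by linarith [(hF (y + γ)).2, (hF (y - γ)).1]⟩) s t
  have hleft : IntervalIntegrable (fun x => φ (F x / (2 * γ))) volume a b :=
    intervalIntegrable_comp_of_mem_Icc hφ' hFm hF a b
  have hright : IntervalIntegrable (fun x => φ ((1 - F x) / (2 * γ))) volume a b :=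
    intervalIntegrable_comp_of_mem_Icc (k := fun x => 1 - F x) (m := 0) (M := 1) hφ'
      (measurable_const.sub hFm)
      (fun x => ⟨by linarith [(hF x).2], by linarith [(hF x).1]⟩) a b
  rw [integral_comp_uniformConvDensity_eq_intervalIntegral hφ0 hF0 hF1 hab (by linarith),
    ← intervalIntegral.integral_add_adjacent_intervals (hdensity _ (a + γ)) (hdensity _ _),
    ← intervalIntegral.integral_add_adjacent_intervals (hdensity _ (b - γ)) (hdensity _ _),
    intervalIntegral_comp_uniformConvDensity_left hF0 hab hγ,
    intervalIntegral_comp_uniformConvDensity_middle hF0 hF1 hγ,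
    intervalIntegral_comp_uniformConvDensity_right hF1 hab hγ,
    intervalIntegral.integral_add hleft hright]
  ring

theorem neg_integral_mul_logb_uniformConvDensity (c : ℝ) (hFm : Measurable F)
    (hF : ∀ x, F x ∈ Icc 0 1) (hF0 : ∀ x < a, F x = 0) (hF1 : ∀ x, b ≤ x → F x = 1)
    (hγ : b - a < 2 * γ) :
    -∫ y, uniformConvDensity F γ y * Real.logb c (uniformConvDensity F γ y)
      = Real.logb c (2 * γ) - 1 / (2 * γ) *
          ∫ x in a..b, (F x * Real.logb c (F x) + (1 - F x) * Real.logb c (1 - F x)) := by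
  have hab : a ≤ b := le_of_eq_zero_of_eq_one hF0 hF1
  have hγ0 : γ ≠ 0 := by linarith
  have h2γ0 : 2 * γ ≠ 0 := by linarith
  have hbinary : IntervalIntegrable
      (fun x => F x * Real.logb c (F x) + (1 - F x) * Real.logb c (1 - F x)) volume a b :=
    intervalIntegrable_comp_of_mem_Icc (k := F) (m := 0) (M := 1)
      (φ := fun t => t * Real.logb c t + (1 - t) * Real.logb c (1 - t))
      ((Real.continuous_mul_logb c).add
        ((Real.continuous_mul_logb c).comp (continuous_const.sub continuous_id))) hFm hF a b
  have hsplit (x : ℝ) :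
      F x / (2 * γ) * Real.logb c (F x / (2 * γ))
        + (1 - F x) / (2 * γ) * Real.logb c ((1 - F x) / (2 * γ))
      = 1 / (2 * γ) * (F x * Real.logb c (F x) + (1 - F x) * Real.logb c (1 - F x))
        - Real.logb c (2 * γ) / (2 * γ) := by
    rw [Real.mul_logb_div c _ h2γ0, Real.mul_logb_div c _ h2γ0]
    ring
  rw [integral_comp_uniformConvDensity (Real.continuous_mul_logb c) (by simp) hFm hF hF0 hF1 hγ,
    intervalIntegral.integral_congr fun x _ => hsplit x,
    intervalIntegral.integral_sub (hbinary.const_mul _) intervalIntegrable_const,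
    intervalIntegral.integral_const_mul, intervalIntegral.integral_const, smul_eq_mul,
    Real.mul_logb_div c 1 h2γ0, Real.logb_one]
  field_simp
  ring

end Smoothing

theorem entropy_of_smoothed_cdf_eq_general (β γ : ℝ) (hβγ : β < γ)
    (μ : Measure ℝ) [IsProbabilityMeasure μ] (hμ : μ (Set.Icc (-β) β) = 1)
    (F : ℝ → ℝ) (hF : ∀ x, F x = (μ (Set.Iic x)).toReal)
    (g : ℝ → ℝ) (hg : ∀ y, g y = (F (y + γ) - F (y - γ)) / (2 * γ)) :
    -∫ y, g y * Real.logb 2 (g y)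
      = Real.logb 2 (2 * γ)
        - (1 / (2 * γ)) * ∫ y in (-β)..β,
            (F y * Real.logb 2 (F y) + (1 - F y) * Real.logb 2 (1 - F y)) := by
  obtain rfl : g = uniformConvDensity F γ := funext hg
  obtain rfl : F = cdf μ := funext fun x => by rw [hF, cdf_eq_real, measureReal_def]
  exact neg_integral_mul_logb_uniformConvDensity 2 (monotone_cdf μ).measurable
    (fun x => ⟨cdf_nonneg μ x, cdf_le_one μ x⟩) (fun _ => cdf_eq_zero_of_lt hμ)
    (fun _ => cdf_eq_one_of_le hμ) (by linarith)

theorem entropy_of_smoothed_cdf_eq (β γ : ℝ) (hβ : 0 < β) (hβγ : β < γ)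
    (μ : Measure ℝ) [IsProbabilityMeasure μ] (hμ : μ (Set.Icc (-β) β) = 1)
    (F : ℝ → ℝ) (hF : ∀ x, F x = (μ (Set.Iic x)).toReal)
    (g : ℝ → ℝ) (hg : ∀ y, g y = (F (y + γ) - F (y - γ)) / (2 * γ)) :
    -∫ y, g y * Real.logb 2 (g y)
      = Real.logb 2 (2 * γ)
        - (1 / (2 * γ)) * ∫ y in (-β)..β,
            (F y * Real.logb 2 (F y) + (1 - F y) * Real.logb 2 (1 - F y)) :=
  entropy_of_smoothed_cdf_eq_general β γ hβγ μ hμ F hF g hg
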